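/- Let σ ∈ (0, 0.1], let T ≥ 1, and let z_1,…,z_T be independent random variables, each with the truncated Gaussian distribution N^T(0, σ², [−1/2, 1/2]). Then Pr[ Σ_{k=1}^T log(1/(1 + z_k)) ≥ 4σT ] ≤ exp(−8σ²T/(log 3)²). -/

import Mathlib

open MeasureTheory

/-- Standard Gaussian density `φ(t) = e^{-t²/2}/√(2π)`. -/
noncomputable def gaussPDF (t : ℝ) : ℝ := Real.exp (-t ^ 2 / 2) / Real.sqrt (2 * Real.pi)

/-- Standard Gaussian cumulative distribution function `Φ`. -/
noncomputable def gaussCDF (x : ℝ) : ℝ := ∫ t in Set.Iic x, gaussPDF t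

/-- `C_σ = Φ(1/(2σ)) − Φ(−1/(2σ))`. -/
noncomputable def Csigma (σ : ℝ) : ℝ := gaussCDF (1 / (2 * σ)) - gaussCDF (-(1 / (2 * σ)))

/-- `C_{β,σ} = Φ((1/2 − β)/σ) − Φ((−1/2 − β)/σ)`. -/
noncomputable def Cbetasigma (β σ : ℝ) : ℝ :=
  gaussCDF ((1 / 2 - β) / σ) - gaussCDF ((-(1 / 2) - β) / σ)

/-- `γ_{β,σ} = C_σ / C_{β,σ}`. -/
noncomputable def gammaBS (β σ : ℝ) : ℝ := Csigma σ / Cbetasigma β σ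

/-- Density of the truncated Gaussian distribution `N^T(μ, σ², [−1/2, 1/2])`. -/
noncomputable def truncPDF (μ σ : ℝ) (z : ℝ) : ℝ :=
  if z ∈ Set.Icc (-(1 / 2) : ℝ) (1 / 2) then
    gaussPDF ((z - μ) / σ) /
      (σ * (gaussCDF ((1 / 2 - μ) / σ) - gaussCDF ((-(1 / 2) - μ) / σ)))
  else 0

open MeasureTheory Real Set
open scoped ENNReal NNReal

lemma sqrt2pi_pos : 0 < Real.sqrt (2 * Real.pi) := Real.sqrt_pos.mpr (by positivity)

lemma sqrt2pi_ge : (2:ℝ) ≤ Real.sqrt (2 * Real.pi) := by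
  rw [Real.le_sqrt (by norm_num) (by positivity)]
  nlinarith [Real.pi_gt_three]

lemma sqrt2pi_le : Real.sqrt (2 * Real.pi) ≤ 2.51 := by
  rw [Real.sqrt_le_iff]
  constructor
  · norm_num
  · nlinarith [Real.pi_lt_d2]

lemma gaussPDF_pos (t : ℝ) : 0 < gaussPDF t := by
  unfold gaussPDF; positivity

lemma gaussPDF_anti {s t : ℝ} (h : t ^ 2 ≤ s ^ 2) : gaussPDF s ≤ gaussPDF t := by
  unfold gaussPDF
  have := sqrt2pi_pos
  gcongr


lemma gaussPDF_le_half (t : ℝ) : gaussPDF t ≤ 1 / 2 := by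
  unfold gaussPDF
  calc Real.exp (-t ^ 2 / 2) / Real.sqrt (2 * Real.pi) ≤ 1 / 2 := by
        apply div_le_div₀ (by norm_num) ?_ (by norm_num) sqrt2pi_ge
        rw [show (1:ℝ) = Real.exp 0 by simp]
        exact Real.exp_le_exp.mpr (by nlinarith [sq_nonneg t])

lemma continuous_gaussPDF : Continuous gaussPDF := by
  unfold gaussPDF
  exact ((continuous_pow 2).neg.div_const 2).rexp.div_const _

lemma integrable_gaussPDF : Integrable gaussPDF := by
  have h : Integrable (fun t : ℝ => Real.exp (-(1/2) * t ^ 2)) := integrable_exp_neg_mul_sq (by norm_num)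
  have : gaussPDF = fun t => Real.exp (-(1/2) * t ^ 2) * (1 / Real.sqrt (2 * Real.pi)) := by
    funext t; unfold gaussPDF; ring_nf
  rw [this]
  exact h.mul_const _

lemma numeric_gauss : (1:ℝ)/4 ≤ gaussPDF 1 + gaussPDF 2 := by
  unfold gaussPDF
  have h1 : Real.exp 1 < 2.7182818286 := Real.exp_one_lt_d9
  have he : (3:ℝ)/5 ≤ Real.exp (-(1:ℝ) ^ 2 / 2) := by
    rw [show (-(1:ℝ)^2/2) = -(1/2) by norm_num, Real.exp_neg]
    rw [le_inv_comm₀ (by norm_num) (Real.exp_pos _)]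
    have : Real.exp (1/2) * Real.exp (1/2) = Real.exp 1 := by rw [← Real.exp_add]; norm_num
    nlinarith [Real.exp_pos (1/2:ℝ)]
  have he2 : (1:ℝ)/8 ≤ Real.exp (-(2:ℝ) ^ 2 / 2) := by
    rw [show (-(2:ℝ)^2/2) = -2 by norm_num, Real.exp_neg]
    rw [le_inv_comm₀ (by norm_num) (Real.exp_pos _)]
    have : Real.exp 2 = Real.exp 1 * Real.exp 1 := by rw [← Real.exp_add]; norm_num
    nlinarith [Real.exp_pos (1:ℝ)]
  have hs := sqrt2pi_le
  have hs0 := sqrt2pi_pos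
  rw [← add_div, le_div_iff₀ hs0]
  nlinarith


lemma intInt_gauss (a b : ℝ) : IntervalIntegrable gaussPDF volume a b :=
  continuous_gaussPDF.intervalIntegrable a b

lemma gaussCDF_sub (c : ℝ) : gaussCDF c - gaussCDF (-c) = ∫ x in (-c)..c, gaussPDF x :=
  intervalIntegral.integral_Iic_sub_Iic integrable_gaussPDF.integrableOn integrable_gaussPDF.integrableOn

lemma piece_ge (a b s : ℝ) (hab : a ≤ b) (hs : ∀ x ∈ Set.Icc a b, s ^ 2 ≤ x ^ 2 ∨ x ^ 2 ≤ s ^ 2)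
    (hs' : ∀ x ∈ Set.Icc a b, x ^ 2 ≤ s ^ 2) :
    (b - a) * gaussPDF s ≤ ∫ x in a..b, gaussPDF x := by
  have := intervalIntegral.integral_mono_on (f := fun _ => gaussPDF s) (g := gaussPDF) hab
    (intervalIntegrable_const) (intInt_gauss a b) (fun x hx => gaussPDF_anti (hs' x hx))
  simpa using this

lemma gaussCDF_sub_ge {c : ℝ} (hc : 2 ≤ c) : 1 / 2 ≤ gaussCDF c - gaussCDF (-c) := by
  rw [gaussCDF_sub]
  have hsplit1 : (∫ x in (-c)..(-2:ℝ), gaussPDF x) + (∫ x in (-2:ℝ)..c, gaussPDF x)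
      = ∫ x in (-c)..c, gaussPDF x :=
    intervalIntegral.integral_add_adjacent_intervals (intInt_gauss _ _) (intInt_gauss _ _)
  have hsplit2 : (∫ x in (-2:ℝ)..(2:ℝ), gaussPDF x) + (∫ x in (2:ℝ)..c, gaussPDF x)
      = ∫ x in (-2:ℝ)..c, gaussPDF x :=
    intervalIntegral.integral_add_adjacent_intervals (intInt_gauss _ _) (intInt_gauss _ _)
  have hsplit3 : (∫ x in (-2:ℝ)..(-1:ℝ), gaussPDF x) + (∫ x in (-1:ℝ)..(2:ℝ), gaussPDF x)
      = ∫ x in (-2:ℝ)..(2:ℝ), gaussPDF x :=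
    intervalIntegral.integral_add_adjacent_intervals (intInt_gauss _ _) (intInt_gauss _ _)
  have hsplit4 : (∫ x in (-1:ℝ)..(1:ℝ), gaussPDF x) + (∫ x in (1:ℝ)..(2:ℝ), gaussPDF x)
      = ∫ x in (-1:ℝ)..(2:ℝ), gaussPDF x :=
    intervalIntegral.integral_add_adjacent_intervals (intInt_gauss _ _) (intInt_gauss _ _)
  have hp1 : ((-1:ℝ) - (-2)) * gaussPDF 2 ≤ ∫ x in (-2:ℝ)..(-1:ℝ), gaussPDF x :=
    piece_ge _ _ _ (by norm_num) (fun x hx => Or.inr (by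
      rcases hx with ⟨h1, h2⟩; nlinarith)) (fun x hx => by
      rcases hx with ⟨h1, h2⟩; nlinarith)
  have hp2 : ((1:ℝ) - (-1)) * gaussPDF 1 ≤ ∫ x in (-1:ℝ)..(1:ℝ), gaussPDF x :=
    piece_ge _ _ _ (by norm_num) (fun x hx => Or.inr (by
      rcases hx with ⟨h1, h2⟩; nlinarith)) (fun x hx => by
      rcases hx with ⟨h1, h2⟩; nlinarith)
  have hp3 : ((2:ℝ) - 1) * gaussPDF 2 ≤ ∫ x in (1:ℝ)..(2:ℝ), gaussPDF x :=
    piece_ge _ _ _ (by norm_num) (fun x hx => Or.inr (by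
      rcases hx with ⟨h1, h2⟩; nlinarith)) (fun x hx => by
      rcases hx with ⟨h1, h2⟩; nlinarith)
  have hn1 : 0 ≤ ∫ x in (-c)..(-2:ℝ), gaussPDF x :=
    intervalIntegral.integral_nonneg (by linarith) (fun x _ => (gaussPDF_pos x).le)
  have hn2 : 0 ≤ ∫ x in (2:ℝ)..c, gaussPDF x :=
    intervalIntegral.integral_nonneg (by linarith) (fun x _ => (gaussPDF_pos x).le)
  have := numeric_gauss
  nlinarith

lemma gauss_subst {σ : ℝ} (hσ : 0 < σ) :
    ∫ z in (-(1/2):ℝ)..(1/2), gaussPDF (z / σ)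
      = σ * (gaussCDF ((1/2) / σ) - gaussCDF ((-(1/2)) / σ)) := by
  rw [intervalIntegral.integral_comp_div (f := gaussPDF) (c := σ) hσ.ne']
  rw [show ((-(1/2)):ℝ) / σ = -((1/2) / σ) by ring]
  rw [← gaussCDF_sub]
  simp [smul_eq_mul]

lemma hasDeriv_gauss {σ : ℝ} (hσ : σ ≠ 0) (z : ℝ) :
    HasDerivAt (fun z => σ ^ 2 * gaussPDF (z / σ)) (-(z * gaussPDF (z / σ))) z := by
  have h0 : HasDerivAt (fun z : ℝ => z / σ) (1 / σ) z := by
    simpa using (hasDerivAt_id z).div_const σ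
  have h1 : HasDerivAt (fun z => (z / σ) ^ 2) (((2:ℕ):ℝ) * (z / σ) ^ (2 - 1) * (1 / σ)) z := h0.pow 2
  have h2 := h1.neg.div_const 2
  have h3 := h2.exp
  have h4 := h3.div_const (Real.sqrt (2 * Real.pi))
  have h5 := h4.const_mul (σ ^ 2)
  have hfun : (fun z => σ ^ 2 * (Real.exp (-(z / σ) ^ 2 / 2) / Real.sqrt (2 * Real.pi)))
      = fun z => σ ^ 2 * gaussPDF (z / σ) := by
    funext x; rfl
  replace h5 : HasDerivAt (fun z => σ ^ 2 * gaussPDF (z / σ)) (σ ^ 2 * (Real.exp (-(z / σ) ^ 2 / 2) * (-(((2:ℕ):ℝ) * (z / σ) ^ (2 - 1) * (1 / σ)) / 2) / Real.sqrt (2 * Real.pi))) z := h5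
  convert h5 using 1
  unfold gaussPDF
  have hs := sqrt2pi_pos
  field_simp
  ring_nf
  field_simp

lemma int_negz {σ : ℝ} (hσ : 0 < σ) :
    ∫ z in (-(1/2):ℝ)..0, -(z * gaussPDF (z / σ)) ≤ σ ^ 2 / 2 := by
  rw [intervalIntegral.integral_eq_sub_of_hasDerivAt
    (fun x _ => hasDeriv_gauss hσ.ne' x)
    (((continuous_id.mul (continuous_gaussPDF.comp (continuous_id.div_const σ))).neg).intervalIntegrable _ _)]
  have h1 : gaussPDF ((0:ℝ) / σ) ≤ 1 / 2 := gaussPDF_le_half _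
  have h2 : 0 < gaussPDF ((-(1/2)) / σ) := gaussPDF_pos _
  nlinarith [sq_nonneg σ]


lemma cont_inv1z : ContinuousOn (fun z : ℝ => 1 / (1 + z)) (Set.Icc (-(1/2):ℝ) (1/2)) := by
  apply ContinuousOn.div continuousOn_const (continuous_const.add continuous_id).continuousOn
  intro x hx
  rcases hx with ⟨h1, h2⟩
  intro h
  change (1:ℝ) + x = 0 at h
  linarith

lemma J_bound {σ : ℝ} (hσ0 : 0 < σ) :
    ∫ z in Set.Icc (-(1/2):ℝ) (1/2), gaussPDF (z / σ) * (1 / (1 + z))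
      ≤ σ * (gaussCDF ((1/2) / σ) - gaussCDF ((-(1/2)) / σ)) + σ ^ 2 := by
  have hcontφ : Continuous (fun z : ℝ => gaussPDF (z / σ)) :=
    continuous_gaussPDF.comp (continuous_id.div_const σ)
  have hIntφ : ∀ s : Set ℝ, MeasurableSet s → s ⊆ Set.Icc (-(1/2):ℝ) (1/2) →
      IntegrableOn (fun z : ℝ => gaussPDF (z / σ)) s := fun s hs hsub =>
    (hcontφ.integrableOn_Icc.mono_set hsub)
  have hcontH : ContinuousOn (fun z : ℝ => gaussPDF (z / σ) * (1 / (1 + z)))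
      (Set.Icc (-(1/2):ℝ) (1/2)) := hcontφ.continuousOn.mul cont_inv1z
  have hIntH : IntegrableOn (fun z : ℝ => gaussPDF (z / σ) * (1 / (1 + z)))
      (Set.Icc (-(1/2):ℝ) (1/2)) := hcontH.integrableOn_Icc
  -- split the domain
  have hunion : Set.Icc (-(1/2):ℝ) 0 ∪ Set.Ioc (0:ℝ) (1/2) = Set.Icc (-(1/2):ℝ) (1/2) :=
    Set.Icc_union_Ioc_eq_Icc (by norm_num) (by norm_num)
  have hdisj : Disjoint (Set.Icc (-(1/2):ℝ) 0) (Set.Ioc (0:ℝ) (1/2)) := by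
    apply Set.disjoint_left.mpr
    rintro x ⟨_, hx2⟩ ⟨hx3, _⟩
    linarith
  have hsub1 : Set.Icc (-(1/2):ℝ) 0 ⊆ Set.Icc (-(1/2):ℝ) (1/2) := by
    apply Set.Icc_subset_Icc le_rfl; norm_num
  have hsub2 : Set.Ioc (0:ℝ) (1/2) ⊆ Set.Icc (-(1/2):ℝ) (1/2) := by
    intro x hx; exact ⟨by linarith [hx.1], hx.2⟩
  have hsplitH : (∫ z in Set.Icc (-(1/2):ℝ) (1/2), gaussPDF (z / σ) * (1 / (1 + z)))
      = (∫ z in Set.Icc (-(1/2):ℝ) 0, gaussPDF (z / σ) * (1 / (1 + z)))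
        + ∫ z in Set.Ioc (0:ℝ) (1/2), gaussPDF (z / σ) * (1 / (1 + z)) := by
    rw [← hunion, setIntegral_union hdisj measurableSet_Ioc
      (hIntH.mono_set (hunion ▸ hsub1)) (hIntH.mono_set (hunion ▸ hsub2))]
  have hsplitφ : (∫ z in Set.Icc (-(1/2):ℝ) (1/2), gaussPDF (z / σ))
      = (∫ z in Set.Icc (-(1/2):ℝ) 0, gaussPDF (z / σ))
        + ∫ z in Set.Ioc (0:ℝ) (1/2), gaussPDF (z / σ) := by
    rw [← hunion, setIntegral_union hdisj measurableSet_Ioc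
      (hIntφ _ measurableSet_Icc hsub1) (hIntφ _ measurableSet_Ioc hsub2)]
  -- bound on the negative part
  have hb1 : (∫ z in Set.Icc (-(1/2):ℝ) 0, gaussPDF (z / σ) * (1 / (1 + z)))
      ≤ ∫ z in Set.Icc (-(1/2):ℝ) 0, (gaussPDF (z / σ) + 2 * -(z * gaussPDF (z / σ))) := by
    have hIntm : IntegrableOn (fun z : ℝ => 2 * -(z * gaussPDF (z / σ)))
        (Set.Icc (-(1/2):ℝ) 0) := by
      apply Continuous.integrableOn_Icc
      fun_prop
    apply setIntegral_mono_on (hIntH.mono_set hsub1)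
    · exact Integrable.add (hIntφ _ measurableSet_Icc hsub1) hIntm
    · exact measurableSet_Icc
    · rintro x ⟨h1, h2⟩
      have hx : (0:ℝ) < 1 + x := by linarith
      have hpos := gaussPDF_pos (x / σ)
      rw [mul_one_div, div_le_iff₀ hx]
      nlinarith [mul_nonneg (mul_nonneg hpos.le (by linarith : (0:ℝ) ≤ -x))
        (by linarith : (0:ℝ) ≤ 1 + 2*x)]
  -- bound on the positive part
  have hb2 : (∫ z in Set.Ioc (0:ℝ) (1/2), gaussPDF (z / σ) * (1 / (1 + z)))
      ≤ ∫ z in Set.Ioc (0:ℝ) (1/2), gaussPDF (z / σ) := by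
    apply setIntegral_mono_on (hIntH.mono_set hsub2) (hIntφ _ measurableSet_Ioc hsub2)
      measurableSet_Ioc
    rintro x ⟨h1, h2⟩
    have hx : (0:ℝ) < 1 + x := by linarith
    have hpos := gaussPDF_pos (x / σ)
    rw [mul_one_div, div_le_iff₀ hx]
    nlinarith
  -- the moment integral
  have hmom : (∫ z in Set.Icc (-(1/2):ℝ) 0, -(z * gaussPDF (z / σ))) ≤ σ ^ 2 / 2 := by
    rw [MeasureTheory.integral_Icc_eq_integral_Ioc,
      ← intervalIntegral.integral_of_le (by norm_num : (-(1/2):ℝ) ≤ 0)]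
    exact int_negz hσ0
  have hlin : (∫ z in Set.Icc (-(1/2):ℝ) 0, (gaussPDF (z / σ) + 2 * -(z * gaussPDF (z / σ))))
      = (∫ z in Set.Icc (-(1/2):ℝ) 0, gaussPDF (z / σ))
        + 2 * ∫ z in Set.Icc (-(1/2):ℝ) 0, -(z * gaussPDF (z / σ)) := by
    have hIntm : IntegrableOn (fun z : ℝ => 2 * -(z * gaussPDF (z / σ)))
        (Set.Icc (-(1/2):ℝ) 0) := by
      apply Continuous.integrableOn_Icc
      fun_prop
    rw [integral_add (hIntφ _ measurableSet_Icc hsub1) hIntm, integral_const_mul]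
  -- normalization integral
  have hnorm : (∫ z in Set.Icc (-(1/2):ℝ) (1/2), gaussPDF (z / σ))
      = σ * (gaussCDF ((1/2) / σ) - gaussCDF ((-(1/2)) / σ)) := by
    rw [MeasureTheory.integral_Icc_eq_integral_Ioc,
      ← intervalIntegral.integral_of_le (by norm_num : (-(1/2):ℝ) ≤ 1/2)]
    exact gauss_subst hσ0
  calc (∫ z in Set.Icc (-(1/2):ℝ) (1/2), gaussPDF (z / σ) * (1 / (1 + z)))
      ≤ (∫ z in Set.Icc (-(1/2):ℝ) 0, gaussPDF (z / σ))
          + 2 * (σ ^ 2 / 2) + ∫ z in Set.Ioc (0:ℝ) (1/2), gaussPDF (z / σ) := by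
        rw [hsplitH]
        have := hb1.trans (le_of_eq hlin)
        have h2' : 2 * (∫ z in Set.Icc (-(1/2):ℝ) 0, -(z * gaussPDF (z / σ))) ≤ 2 * (σ ^ 2 / 2) := by
          linarith
        linarith
    _ = σ * (gaussCDF ((1/2) / σ) - gaussCDF ((-(1/2)) / σ)) + σ ^ 2 := by
        rw [← hnorm, hsplitφ]; ring

lemma D_ge {σ : ℝ} (hσ0 : 0 < σ) (hσ1 : σ ≤ 0.1) :
    1 / 2 ≤ gaussCDF ((1 / 2 - 0) / σ) - gaussCDF ((-(1 / 2) - 0) / σ) := by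
  have h1 : ((1:ℝ) / 2 - 0) / σ = (1/2) / σ := by ring
  have h2 : ((-(1:ℝ) / 2) - 0) / σ = -((1/2) / σ) := by ring
  have h2' : ((-((1:ℝ) / 2)) - 0) / σ = -((1/2) / σ) := by ring
  rw [h1, h2']
  apply gaussCDF_sub_ge
  rw [le_div_iff₀ hσ0]
  linarith

lemma measurable_truncPDF (σ : ℝ) : Measurable (truncPDF 0 σ) := by
  unfold truncPDF
  exact Measurable.ite measurableSet_Icc
    ((continuous_gaussPDF.comp ((continuous_id.sub continuous_const).div_const σ)).measurable.div_const _)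
    measurable_const

lemma truncPDF_nonneg {σ : ℝ} (hσ0 : 0 < σ) (hσ1 : σ ≤ 0.1) (z : ℝ) :
    0 ≤ truncPDF 0 σ z := by
  unfold truncPDF
  split_ifs
  · have hD := D_ge hσ0 hσ1
    exact (div_pos (gaussPDF_pos _) (mul_pos hσ0 (by linarith))).le
  · exact le_refl 0

lemma truncPDF_pos {σ : ℝ} (hσ0 : 0 < σ) (hσ1 : σ ≤ 0.1) {z : ℝ}
    (hz : z ∈ Set.Icc (-(1/2):ℝ) (1/2)) : 0 < truncPDF 0 σ z := by
  unfold truncPDF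
  rw [if_pos hz]
  have hD := D_ge hσ0 hσ1
  exact div_pos (gaussPDF_pos _) (mul_pos hσ0 (by linarith))

lemma trunc_exp_int {σ : ℝ} (hσ0 : 0 < σ) (hσ1 : σ ≤ 0.1) :
    ∫ z, truncPDF 0 σ z * Real.exp (Real.log (1 / (1 + z))) ≤ 1 + 2 * σ := by
  set D := gaussCDF ((1 / 2 - 0) / σ) - gaussCDF ((-(1 / 2) - 0) / σ) with hDdef
  clear_value D
  have hD : 1 / 2 ≤ D := hDdef ▸ D_ge hσ0 hσ1
  have hσD : 0 < σ * D := by positivity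
  have hind : (fun z => truncPDF 0 σ z * Real.exp (Real.log (1 / (1 + z))))
      = Set.indicator (Set.Icc (-(1/2):ℝ) (1/2))
          (fun z => gaussPDF (z / σ) / (σ * D) * Real.exp (Real.log (1 / (1 + z)))) := by
    funext z
    by_cases h : z ∈ Set.Icc (-(1/2):ℝ) (1/2)
    · rw [Set.indicator_of_mem h]
      unfold truncPDF
      rw [if_pos h, sub_zero, hDdef]
    · rw [Set.indicator_of_notMem h]
      unfold truncPDF
      rw [if_neg h, zero_mul]
  rw [hind, integral_indicator measurableSet_Icc]
  have hcongr : ∫ z in Set.Icc (-(1/2):ℝ) (1/2),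
        gaussPDF (z / σ) / (σ * D) * Real.exp (Real.log (1 / (1 + z)))
      = ∫ z in Set.Icc (-(1/2):ℝ) (1/2), (σ * D)⁻¹ * (gaussPDF (z / σ) * (1 / (1 + z))) := by
    apply setIntegral_congr_fun measurableSet_Icc
    intro z hz
    rcases hz with ⟨h1, h2⟩
    have hz1 : (0:ℝ) < 1 + z := by linarith
    simp only []
    rw [Real.exp_log (by positivity : (0:ℝ) < 1 / (1 + z))]
    field_simp
  rw [hcongr, integral_const_mul]
  have hJ := J_bound hσ0
  have hDeq : gaussCDF ((1/2) / σ) - gaussCDF ((-(1/2)) / σ) = D := by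
    rw [hDdef]
    norm_num
  rw [hDeq] at hJ
  have h1 : (σ * D)⁻¹ * (∫ z in Set.Icc (-(1/2):ℝ) (1/2), gaussPDF (z / σ) * (1 / (1 + z)))
      ≤ (σ * D)⁻¹ * (σ * D + σ ^ 2) := by
    apply mul_le_mul_of_nonneg_left hJ (by positivity)
  refine h1.trans ?_
  rw [inv_mul_le_iff₀ hσD]
  nlinarith [mul_nonneg (sq_nonneg σ) (by linarith : (0:ℝ) ≤ 2 * D - 1)]

open ProbabilityTheory in
lemma iIndepFun_of_ae_eq {Ω : Type*} [MeasurableSpace Ω] {μ : Measure Ω} {ι : Type*}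
    {f g : ι → Ω → ℝ}
    (h : iIndepFun f μ) (hfg : ∀ i, f i =ᵐ[μ] g i) :
    iIndepFun g μ := by
  rw [ProbabilityTheory.iIndepFun_iff_measure_inter_preimage_eq_mul] at h ⊢
  intro S sets hsets
  have hpre : ∀ i, (f i ⁻¹' sets i : Set Ω) =ᵐ[μ] (g i ⁻¹' sets i) := fun i =>
    Filter.eventuallyEq_set.mpr ((hfg i).mono fun ω hω => by
      simp only [Set.mem_preimage, hω])
  have hiInter : (⋂ i ∈ S, f i ⁻¹' sets i) =ᵐ[μ] (⋂ i ∈ S, g i ⁻¹' sets i) := by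
    apply Filter.eventuallyEq_set.mpr
    have hall : ∀ᵐ ω ∂μ, ∀ i ∈ S, (ω ∈ f i ⁻¹' sets i ↔ ω ∈ g i ⁻¹' sets i) := by
      rw [Filter.eventually_all_finset]
      exact fun i _ => Filter.eventuallyEq_set.mp (hpre i)
    filter_upwards [hall] with ω hω
    simp only [Set.mem_iInter]
    exact ⟨fun h' i hi => (hω i hi).mp (h' i hi), fun h' i hi => (hω i hi).mpr (h' i hi)⟩
  calc μ (⋂ i ∈ S, g i ⁻¹' sets i) = μ (⋂ i ∈ S, f i ⁻¹' sets i) :=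
        (measure_congr hiInter).symm
    _ = ∏ i ∈ S, μ (f i ⁻¹' sets i) := h S hsets
    _ = ∏ i ∈ S, μ (g i ⁻¹' sets i) := Finset.prod_congr rfl fun i _ =>
        measure_congr (hpre i)

open ProbabilityTheory in
theorem truncated_gaussian_hoeffding
    {Ω : Type*} [MeasurableSpace Ω] (μ : Measure Ω) [IsProbabilityMeasure μ]
    (σ : ℝ) (hσ0 : 0 < σ) (hσ1 : σ ≤ 0.1)
    (T : ℕ) (hT : 1 ≤ T)
    (Z : Fin T → Ω → ℝ)
    (hindep : ProbabilityTheory.iIndepFun Z μ)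
    (hdist : ∀ k : Fin T,
      μ.map (Z k) = volume.withDensity (fun z => ENNReal.ofReal (truncPDF 0 σ z))) :
    μ {ω | 4 * σ * T ≤ ∑ k : Fin T, Real.log (1 / (1 + Z k ω))} ≤
      ENNReal.ofReal (Real.exp (-(8 * σ ^ 2 * T) / Real.log 3 ^ 2)) := by
  have hIcc : MeasurableSet (Set.Icc (-(1/2):ℝ) (1/2)) := measurableSet_Icc
  -- Step 1: Z k is a.e.-measurable
  have hZae : ∀ k, AEMeasurable (Z k) μ := by
    intro k
    by_contra h
    have h0 := hdist k
    rw [Measure.map_of_not_aemeasurable h] at h0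
    have h1 : (volume.withDensity fun z => ENNReal.ofReal (truncPDF 0 σ z)) Set.univ = 0 := by
      rw [← h0]; simp
    rw [withDensity_apply _ MeasurableSet.univ, Measure.restrict_univ] at h1
    have h2 : ∫⁻ z in Set.Icc (-(1/2):ℝ) (1/2), ENNReal.ofReal (truncPDF 0 σ z)
        ≤ ∫⁻ z, ENNReal.ofReal (truncPDF 0 σ z) := setLIntegral_le_lintegral _ _
    have h3 : ENNReal.ofReal (truncPDF 0 σ (1/2)) * volume (Set.Icc (-(1/2):ℝ) (1/2))
        ≤ ∫⁻ z in Set.Icc (-(1/2):ℝ) (1/2), ENNReal.ofReal (truncPDF 0 σ z) := by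
      rw [← setLIntegral_const]
      apply setLIntegral_mono' hIcc
      intro z hz
      apply ENNReal.ofReal_le_ofReal
      unfold truncPDF
      rw [if_pos hz, if_pos (by constructor <;> norm_num : (1/2 : ℝ) ∈ Set.Icc (-(1/2):ℝ) (1/2))]
      have hD := D_ge hσ0 hσ1
      have hσD : 0 < σ * (gaussCDF ((1 / 2 - 0) / σ) - gaussCDF ((-(1 / 2) - 0) / σ)) :=
        mul_pos hσ0 (by linarith)
      gcongr
      apply gaussPDF_anti
      rw [div_pow, div_pow]
      apply div_le_div_of_nonneg_right ?_ (by positivity)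
      rcases hz with ⟨ha, hb⟩
      nlinarith
    rw [Real.volume_Icc] at h3
    have hvol : ENNReal.ofReal ((1:ℝ)/2 - -(1/2)) = 1 := by norm_num
    rw [hvol, mul_one] at h3
    have hpos : 0 < truncPDF 0 σ (1/2) :=
      truncPDF_pos hσ0 hσ1 (by constructor <;> norm_num)
    have : ENNReal.ofReal (truncPDF 0 σ (1/2)) = 0 := le_antisymm (h1 ▸ (h3.trans h2)) zero_le
    rw [ENNReal.ofReal_eq_zero] at this
    linarith
  -- Step 2: Z k lands in the interval a.s.
  have hmem : ∀ k, ∀ᵐ ω ∂μ, Z k ω ∈ Set.Icc (-(1/2):ℝ) (1/2) := by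
    intro k
    have hc : μ.map (Z k) (Set.Icc (-(1/2):ℝ) (1/2))ᶜ = 0 := by
      rw [hdist k, withDensity_apply _ hIcc.compl]
      have : ∀ z ∈ (Set.Icc (-(1/2):ℝ) (1/2))ᶜ, ENNReal.ofReal (truncPDF 0 σ z) = 0 := by
        intro z hz
        unfold truncPDF
        rw [if_neg (by simpa using hz)]
        simp
      rw [setLIntegral_congr_fun hIcc.compl this]
      simp
    rw [Measure.map_apply_of_aemeasurable (hZae k) hIcc.compl] at hc
    rw [ae_iff]
    exact hc
  -- Step 3: measurable modifications
  set Z' : Fin T → Ω → ℝ := fun k => (hZae k).mk (Z k) with hZ'def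
  have hZ'meas : ∀ k, Measurable (Z' k) := fun k => (hZae k).measurable_mk
  have heq : ∀ k, Z k =ᵐ[μ] Z' k := fun k => (hZae k).ae_eq_mk
  have hmem' : ∀ k, ∀ᵐ ω ∂μ, Z' k ω ∈ Set.Icc (-(1/2):ℝ) (1/2) := by
    intro k
    filter_upwards [hmem k, heq k] with ω h1 h2
    rw [← h2]; exact h1
  set f : ℝ → ℝ := fun x => Real.log (1 / (1 + x)) with hfdef
  have hfmeas : Measurable f :=
    Real.measurable_log.comp (measurable_const.div (measurable_const.add measurable_id))
  set X : Fin T → Ω → ℝ := fun k => f ∘ Z' k with hXdef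
  have hXmeas : ∀ k, Measurable (X k) := fun k => hfmeas.comp (hZ'meas k)
  have hindep' : iIndepFun Z' μ := iIndepFun_of_ae_eq hindep heq
  have hindepX : iIndepFun X μ := hindep'.comp _ (fun _ => hfmeas)
  -- Step 4: the mgf of each coordinate at t = 1
  have hmgf : ∀ k, mgf (X k) μ 1 ≤ 1 + 2 * σ := by
    intro k
    have h1 : mgf (X k) μ 1 = ∫ ω, Real.exp (f (Z' k ω)) ∂μ := by
      unfold mgf
      simp only [one_mul]
      rfl
    have h2 : ∫ ω, Real.exp (f (Z' k ω)) ∂μ = ∫ z, Real.exp (f z) ∂(μ.map (Z' k)) :=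
      (integral_map (hZ'meas k).aemeasurable
        (hfmeas.exp.aestronglyMeasurable)).symm
    have h3 : μ.map (Z' k) = volume.withDensity (fun z => ENNReal.ofReal (truncPDF 0 σ z)) := by
      rw [← Measure.map_congr (heq k)]
      exact hdist k
    have h4 : ∫ z, Real.exp (f z) ∂(volume.withDensity
        (fun z => ENNReal.ofReal (truncPDF 0 σ z)))
        = ∫ z, truncPDF 0 σ z * Real.exp (f z) := by
      have hw : (fun z => ENNReal.ofReal (truncPDF 0 σ z))
          = fun z => ((fun z => (truncPDF 0 σ z).toNNReal) z : ℝ≥0∞) := rfl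
      rw [hw, integral_withDensity_eq_integral_smul
        ((measurable_truncPDF σ).real_toNNReal) _]
      congr 1
      funext z
      rw [NNReal.smul_def, Real.coe_toNNReal _ (truncPDF_nonneg hσ0 hσ1 z), smul_eq_mul]
    rw [h1, h2, h3, h4]
    exact trunc_exp_int hσ0 hσ1
  -- Step 5: integrability of exp of the sum
  have hball : ∀ᵐ ω ∂μ, ∀ k, Z' k ω ∈ Set.Icc (-(1/2):ℝ) (1/2) := ae_all_iff.mpr hmem'
  have hSmeas : Measurable (fun ω => ∑ k : Fin T, X k ω) :=
    Finset.measurable_sum _ (fun k _ => hXmeas k)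
  have hint : Integrable (fun ω => Real.exp (1 * ∑ k : Fin T, X k ω)) μ := by
    apply Integrable.mono' (integrable_const (Real.exp (T * Real.log 2)))
    · exact ((hSmeas.const_mul 1).exp).aestronglyMeasurable
    · filter_upwards [hball] with ω hω
      rw [Real.norm_eq_abs, abs_of_pos (Real.exp_pos _), one_mul]
      apply Real.exp_le_exp.mpr
      calc ∑ k : Fin T, X k ω ≤ ∑ _k : Fin T, Real.log 2 := by
            apply Finset.sum_le_sum
            intro k _
            have hk := hω k
            rcases hk with ⟨ha, hb⟩
            have hz1 : (0:ℝ) < 1 + Z' k ω := by linarith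
            show Real.log (1 / (1 + Z' k ω)) ≤ Real.log 2
            apply Real.log_le_log (by positivity)
            rw [div_le_iff₀ hz1]
            linarith
        _ = T * Real.log 2 := by
            rw [Finset.sum_const, Finset.card_univ, Fintype.card_fin, nsmul_eq_mul]
  -- Step 6: Chernoff bound
  have hcher := measure_ge_le_exp_mul_mgf (μ := μ) (X := fun ω => ∑ k : Fin T, X k ω)
    (t := 1) (4 * σ * T) zero_le_one hint
  have hsum_eq : (fun ω => ∑ k : Fin T, X k ω) = ∑ k : Fin T, X k := by
    funext ω; rw [Finset.sum_apply]
  have hprod : mgf (fun ω => ∑ k : Fin T, X k ω) μ 1 = ∏ k : Fin T, mgf (X k) μ 1 := by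
    rw [hsum_eq]
    exact hindepX.mgf_sum hXmeas Finset.univ
  have hprodle : ∏ k : Fin T, mgf (X k) μ 1 ≤ (1 + 2 * σ) ^ T := by
    calc ∏ k : Fin T, mgf (X k) μ 1 ≤ ∏ _k : Fin T, (1 + 2 * σ) :=
          Finset.prod_le_prod (fun k _ => mgf_nonneg) (fun k _ => hmgf k)
      _ = (1 + 2 * σ) ^ T := by
          rw [Finset.prod_const, Finset.card_univ, Fintype.card_fin]
  -- Step 7: numeric conclusion
  have hlog3 : 1 ≤ Real.log 3 := by
    rw [Real.le_log_iff_exp_le (by norm_num)]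
    exact Real.exp_one_lt_d9.le.trans (by norm_num)
  have hnum : Real.exp (-1 * (4 * σ * T)) * (1 + 2 * σ) ^ T
      ≤ Real.exp (-(8 * σ ^ 2 * T) / Real.log 3 ^ 2) := by
    have hstep1 : (1 + 2 * σ) ^ T ≤ Real.exp (2 * σ) ^ T := by
      apply pow_le_pow_left₀ (by linarith)
      linarith [Real.add_one_le_exp (2 * σ)]
    have hstep2 : Real.exp (2 * σ) ^ T = Real.exp (2 * σ * T) := by
      rw [← Real.exp_nat_mul]; ring_nf
    have hstep3 : Real.exp (-1 * (4 * σ * T)) * Real.exp (2 * σ * T)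
        = Real.exp (-(2 * σ * T)) := by
      rw [← Real.exp_add]; ring_nf
    have hstep4 : -(2 * σ * T) ≤ -(8 * σ ^ 2 * T) / Real.log 3 ^ 2 := by
      rw [neg_div, neg_le_neg_iff]
      have hT0 : (0:ℝ) ≤ (T:ℝ) := Nat.cast_nonneg T
      have h1 : 8 * σ ^ 2 * T / Real.log 3 ^ 2 ≤ 8 * σ ^ 2 * T := by
        apply div_le_self (by positivity)
        nlinarith
      have h2 : 8 * σ ^ 2 ≤ 2 * σ := by nlinarith
      nlinarith [mul_le_mul_of_nonneg_right h2 hT0]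
    calc Real.exp (-1 * (4 * σ * T)) * (1 + 2 * σ) ^ T
        ≤ Real.exp (-1 * (4 * σ * T)) * Real.exp (2 * σ) ^ T := by
          apply mul_le_mul_of_nonneg_left hstep1 (Real.exp_pos _).le
      _ = Real.exp (-(2 * σ * T)) := by rw [hstep2, hstep3]
      _ ≤ Real.exp (-(8 * σ ^ 2 * T) / Real.log 3 ^ 2) := Real.exp_le_exp.mpr hstep4
  -- Step 8: put everything together
  have hsetae : {ω | 4 * σ * T ≤ ∑ k : Fin T, Real.log (1 / (1 + Z k ω))}
      =ᵐ[μ] {ω | 4 * σ * (T:ℝ) ≤ ∑ k : Fin T, X k ω} := by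
    apply Filter.eventuallyEq_set.mpr
    filter_upwards [ae_all_iff.mpr heq] with ω hω
    have hsum : ∑ k : Fin T, Real.log (1 / (1 + Z k ω)) = ∑ k : Fin T, X k ω := by
      apply Finset.sum_congr rfl
      intro k _
      rw [hω k]
      rfl
    simp only [Set.mem_setOf_eq, hsum]
  rw [measure_congr hsetae]
  have hfin : μ {ω | 4 * σ * (T:ℝ) ≤ ∑ k : Fin T, X k ω} ≠ ⊤ := measure_ne_top μ _
  rw [ENNReal.le_ofReal_iff_toReal_le hfin (Real.exp_pos _).le]
  calc (μ {ω | 4 * σ * (T:ℝ) ≤ ∑ k : Fin T, X k ω}).toReal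
      ≤ Real.exp (-1 * (4 * σ * T)) * mgf (fun ω => ∑ k : Fin T, X k ω) μ 1 := hcher
    _ = Real.exp (-1 * (4 * σ * T)) * ∏ k : Fin T, mgf (X k) μ 1 := by rw [hprod]
    _ ≤ Real.exp (-1 * (4 * σ * T)) * (1 + 2 * σ) ^ T := by
        apply mul_le_mul_of_nonneg_left hprodle (Real.exp_pos _).le
    _ ≤ Real.exp (-(8 * σ ^ 2 * T) / Real.log 3 ^ 2) := hnum
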